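/- For any connected graph G of order n ≥ 2, γ_tc(M(G ∘ K_1)) = 2n, where G ∘ K_1 is the corona of G. -/

import Mathlib

open SimpleGraph

/-- The middle graph `M(G)`: vertices are `V(G) ⊕ E(G)`; an edge-vertex is adjacent to
another edge-vertex iff the edges are distinct and share an endpoint, and a vertex is
adjacent to an edge iff it is incident to it. -/
def middleGraph {V : Type*} (G : SimpleGraph V) : SimpleGraph (V ⊕ G.edgeSet) where
  Adj x y :=
    match x, y with
    | Sum.inl _, Sum.inl _ => False
    | Sum.inl v, Sum.inr e => v ∈ (e : Sym2 V)
    | Sum.inr e, Sum.inl v => v ∈ (e : Sym2 V)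
    | Sum.inr e, Sum.inr f => e ≠ f ∧ ∃ v, v ∈ (e : Sym2 V) ∧ v ∈ (f : Sym2 V)
  symm := by
    constructor
    rintro (v|e) (w|f) h
    · exact h
    · exact h
    · exact h
    · exact ⟨h.1.symm, h.2.imp fun v hv => ⟨hv.2, hv.1⟩⟩
  loopless := by
    constructor
    rintro (v|e) h
    · exact h
    · exact h.1 rfl

/-- `D` is a total dominating set of `G`: every vertex has a neighbour in `D`. -/
def IsTotalDomSet {V : Type*} (G : SimpleGraph V) (D : Set V) : Prop :=
  ∀ v : V, ∃ u ∈ D, G.Adj v u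

/-- `D` is a total outer-connected dominating set of `G`: it is total dominating and
the subgraph induced on the complement of `D` is connected. -/
def IsTOCDomSet {V : Type*} (G : SimpleGraph V) (D : Set V) : Prop :=
  IsTotalDomSet G D ∧ (G.induce Dᶜ).Connected

/-- The total domination number `γₜ(G)`. -/
noncomputable def totalDomNum {V : Type*} (G : SimpleGraph V) : ℕ :=
  sInf {k | ∃ D : Set V, IsTotalDomSet G D ∧ D.ncard = k}

/-- The total outer-connected domination number `γ_tc(G)`. -/
noncomputable def tocDomNum {V : Type*} (G : SimpleGraph V) : ℕ :=
  sInf {k | ∃ D : Set V, IsTOCDomSet G D ∧ D.ncard = k}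

/-- The set of leaves (vertices of degree 1) of `G`. -/
def leafSet {V : Type*} (G : SimpleGraph V) : Set V :=
  {v | ∃ u, G.neighborSet v = {u}}

/-- The wheel graph with hub `none` and rim cycle on `Fin n`. -/
def wheelGraph (n : ℕ) : SimpleGraph (Option (Fin n)) where
  Adj x y :=
    match x, y with
    | none, none => False
    | none, some _ => True
    | some _, none => True
    | some i, some j => (SimpleGraph.cycleGraph n).Adj i j
  symm := by
    constructor
    rintro (_|i) (_|j) h
    · exact h
    · exact h
    · exact h
    · exact (SimpleGraph.cycleGraph n).symm.symm _ _ h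
  loopless := by
    constructor
    rintro (_|i) h
    · exact h
    · exact (SimpleGraph.cycleGraph n).loopless.irrefl i h

/-- The corona `G ∘ K₁`: to each vertex `a` of `G` (copy `Sum.inl a`) a pendant
vertex `Sum.inr a` is attached. -/
def corona {V : Type*} (G : SimpleGraph V) : SimpleGraph (V ⊕ V) where
  Adj x y :=
    match x, y with
    | Sum.inl a, Sum.inl b => G.Adj a b
    | Sum.inl a, Sum.inr b => a = b
    | Sum.inr a, Sum.inl b => a = b
    | Sum.inr _, Sum.inr _ => False
  symm := by
    constructor
    rintro (a|a) (b|b) h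
    · exact G.symm.symm _ _ h
    · exact h.symm
    · exact h.symm
    · exact h
  loopless := by
    constructor
    rintro (a|a) h
    · exact G.loopless.irrefl a h
    · exact h

/-- The 2-corona `G ∘ P₂`: to each vertex `a` of `G` (copy `Sum.inl a`) a path
`Sum.inl a — Sum.inr (Sum.inl a) — Sum.inr (Sum.inr a)` of length 2 is attached. -/
def corona2 {V : Type*} (G : SimpleGraph V) : SimpleGraph (V ⊕ V ⊕ V) where
  Adj x y :=
    match x, y with
    | Sum.inl a, Sum.inl b => G.Adj a b
    | Sum.inl a, Sum.inr (Sum.inl b) => a = b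
    | Sum.inr (Sum.inl a), Sum.inl b => a = b
    | Sum.inr (Sum.inl a), Sum.inr (Sum.inr b) => a = b
    | Sum.inr (Sum.inr a), Sum.inr (Sum.inl b) => a = b
    | _, _ => False
  symm := by
    constructor
    rintro (a|a|a) (b|b|b) h <;> first | exact G.symm h | exact h.symm | exact h
  loopless := by
    constructor
    rintro (a|a|a) h
    · exact G.loopless.irrefl a h
    · exact h
    · exact h

/-- The spider `S_{1,n,n}`: hub `none`, middle vertices `some (.inl i)`,
leaves `some (.inr i)`; the star `K_{1,n}` with every edge subdivided once. -/
def spiderGraph (n : ℕ) : SimpleGraph (Option (Fin n ⊕ Fin n)) where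
  Adj x y :=
    match x, y with
    | none, some (Sum.inl _) => True
    | some (Sum.inl _), none => True
    | some (Sum.inl i), some (Sum.inr j) => i = j
    | some (Sum.inr i), some (Sum.inl j) => i = j
    | _, _ => False
  symm := by
    constructor
    rintro (_|i|i) (_|j|j) h <;> first | exact h.symm | exact h
  loopless := by
    constructor
    rintro (_|i|i) h <;> exact h

/-- The friendship graph `Fₙ`: `n` triangles sharing the common vertex `none`. -/
def friendshipGraph (n : ℕ) : SimpleGraph (Option (Fin n × Fin 2)) where
  Adj x y :=
    match x, y with
    | none, some _ => True
    | some _, none => True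
    | some (i, a), some (j, b) => i = j ∧ a ≠ b
    | none, none => False
  symm := by
    constructor
    rintro (_|⟨i,a⟩) (_|⟨j,b⟩) h <;> first | exact ⟨h.1.symm, h.2.symm⟩ | exact h
  loopless := by
    constructor
    rintro (_|⟨i,a⟩) h
    · exact h
    · exact h.2 rfl

/-!
Let `P` consist of the `n` pendant vertices and the `n` pendant edges of `G ∘ K₁`. In
`M(G ∘ K₁)` a pendant vertex has its pendant edge as its only neighbour, so every total
outer-connected dominating set `D` contains all pendant edges; and if `D` misses a pendant vertex, that vertex
is isolated in the complement, so connectivity of the complement forces every other vertex,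
in particular each of the `n` vertices of `G`, into `D`. Either way `|D| ≥ 2n`. Conversely `P`
is total dominating, and its complement is a copy of `M(G)`, which is connected since `G` is.
-/

open Function

theorem SimpleGraph.Connected.induce_range {V W : Type*} {G : SimpleGraph V} {H : SimpleGraph W}
    (hG : G.Connected) (φ : G →g H) : (H.induce (Set.range φ)).Connected :=
  hG.map { toFun := fun v => ⟨φ v, v, rfl⟩, map_rel' := φ.map_rel }
    (by rintro ⟨_, v, rfl⟩; exact ⟨v, rfl⟩)

section Domination

variable {V : Type*} {G : SimpleGraph V} {D : Set V} {u v w : V}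

theorem IsTotalDomSet.mem_of_forall_adj_eq (hD : IsTotalDomSet G D)
    (h : ∀ w, G.Adj v w → w = u) : u ∈ D := by
  obtain ⟨w, hw, hvw⟩ := hD v
  exact h w hvw ▸ hw

theorem IsTOCDomSet.mem_of_forall_adj_mem (hD : IsTOCDomSet G D) (hv : v ∉ D)
    (hN : ∀ w, G.Adj v w → w ∈ D) (hwv : w ≠ v) : w ∈ D := by
  by_contra hw
  obtain ⟨p⟩ := hD.2.preconnected ⟨v, hv⟩ ⟨w, hw⟩
  have hp : ¬p.Nil := Walk.not_nil_of_ne fun h => hwv (congrArg Subtype.val h).symm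
  exact p.snd.2 (hN _ (p.adj_snd hp))

theorem tocDomNum_eq_ncard (hD : IsTOCDomSet G D)
    (hmin : ∀ D', IsTOCDomSet G D' → D.ncard ≤ D'.ncard) : tocDomNum G = D.ncard :=
  le_antisymm (Nat.sInf_le ⟨D, hD, rfl⟩)
    (le_csInf ⟨_, D, hD, rfl⟩ (by rintro _ ⟨D', hD', rfl⟩; exact hmin D' hD'))

end Domination

section MiddleGraph

variable {V W : Type*} {G : SimpleGraph V} {H : SimpleGraph W}

@[simp]
theorem middleGraph_adj_inl_inl {v w : V} :
    (middleGraph G).Adj (Sum.inl v) (Sum.inl w) ↔ False := Iff.rfl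

@[simp]
theorem middleGraph_adj_inl_inr {v : V} {e : G.edgeSet} :
    (middleGraph G).Adj (Sum.inl v) (Sum.inr e) ↔ v ∈ (e : Sym2 V) := Iff.rfl

def SimpleGraph.Embedding.middleGraphMap (f : G ↪g H) : middleGraph G →g middleGraph H where
  toFun := Sum.map f f.mapEdgeSet
  map_rel' := by
    rintro (v | e) (w | e') h
    · exact h.elim
    · exact Sym2.mem_map.2 ⟨v, h, rfl⟩
    · exact Sym2.mem_map.2 ⟨w, h, rfl⟩
    · obtain ⟨hne, v, hv, hv'⟩ := h
      exact ⟨f.mapEdgeSet.injective.ne hne, f v, Sym2.mem_map.2 ⟨v, hv, rfl⟩,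
        Sym2.mem_map.2 ⟨v, hv', rfl⟩⟩

@[simp]
theorem SimpleGraph.Embedding.middleGraphMap_inl (f : G ↪g H) (v : V) :
    f.middleGraphMap (Sum.inl v) = Sum.inl (f v) := rfl

@[simp]
theorem SimpleGraph.Embedding.middleGraphMap_inr (f : G ↪g H) (e : G.edgeSet) :
    f.middleGraphMap (Sum.inr e) = Sum.inr (f.mapEdgeSet e) := rfl

theorem middleGraph_connected (hG : G.Connected) : (middleGraph G).Connected := by
  have hreach : ∀ a b, (middleGraph G).Reachable (Sum.inl a) (Sum.inl b) := by
    intro a b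
    rw [reachable_iff_reflTransGen]
    refine ((reachable_iff_reflTransGen a b).1 (hG.preconnected a b)).lift' Sum.inl ?_
    intro a b hab
    let e : G.edgeSet := ⟨s(a, b), hab⟩
    exact .tail (.single (middleGraph_adj_inl_inr (e := e).2 (Sym2.mem_mk_left a b)))
      (Sym2.mem_mk_right a b)
  obtain ⟨a⟩ := hG.nonempty
  refine (connected_iff_exists_forall_reachable _).2 ⟨Sum.inl a, ?_⟩
  rintro (b | e)
  · exact hreach a b
  · exact (hreach a _).trans (middleGraph_adj_inl_inr.2 (Sym2.out_fst_mem (e : Sym2 V))).reachable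

end MiddleGraph

namespace corona

variable {V : Type*} {G : SimpleGraph V}

variable (G) in
def pendantEdge (a : V) : (corona G).edgeSet :=
  ⟨s(Sum.inl a, Sum.inr a), rfl⟩

variable (G) in
def inlEmbedding : G ↪g corona G :=
  ⟨Embedding.inl, Iff.rfl⟩

@[simp]
theorem inlEmbedding_apply (a : V) : inlEmbedding G a = Sum.inl a := rfl

theorem pendantEdge_injective : Injective (pendantEdge G) := by
  intro a b h
  simpa [pendantEdge] using congrArg Subtype.val h

theorem eq_pendantEdge_of_inr_mem {e : (corona G).edgeSet} {a : V}
    (h : Sum.inr a ∈ (e : Sym2 (V ⊕ V))) : e = pendantEdge G a := by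
  have hadj : (corona G).Adj (Sum.inr a) (Sym2.Mem.other h) := by
    rw [← mem_edgeSet, Sym2.other_spec h]
    exact e.2
  obtain ⟨b, hb⟩ : ∃ b, Sym2.Mem.other h = Sum.inl b := by
    rcases hw : Sym2.Mem.other h with b | b
    · exact ⟨b, rfl⟩
    · rw [hw] at hadj
      exact hadj.elim
  rw [hb] at hadj
  apply Subtype.ext
  rw [← Sym2.other_spec h, hb, ← (show a = b from hadj), Sym2.eq_swap]
  rfl

theorem pendantEdge_notMem_range_mapEdgeSet (a : V) :
    pendantEdge G a ∉ Set.range (inlEmbedding G).mapEdgeSet := by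
  rintro ⟨e, he⟩
  have h : Sum.inr a ∈ ((inlEmbedding G).mapEdgeSet e : Sym2 (V ⊕ V)) :=
    he ▸ Sym2.mem_mk_right _ _
  simp [inlEmbedding, Sym2.mem_map] at h

theorem exists_eq_pendantEdge_or_mem_range (e : (corona G).edgeSet) :
    (∃ a, e = pendantEdge G a) ∨ e ∈ Set.range (inlEmbedding G).mapEdgeSet := by
  obtain ⟨e, he⟩ := e
  induction e using Sym2.ind with
  | _ x y =>
  rcases x with a | a
  · rcases y with b | b
    · exact .inr ⟨⟨s(a, b), he⟩, rfl⟩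
    · exact .inl ⟨b, eq_pendantEdge_of_inr_mem (Sym2.mem_mk_right _ _)⟩
  · exact .inl ⟨a, eq_pendantEdge_of_inr_mem (Sym2.mem_mk_left _ _)⟩

theorem middleGraph_adj_inl_inr_iff {a : V} {x : (V ⊕ V) ⊕ (corona G).edgeSet} :
    (middleGraph (corona G)).Adj (Sum.inl (Sum.inr a)) x ↔ x = Sum.inr (pendantEdge G a) := by
  rcases x with v | e
  · simp
  · simp only [middleGraph_adj_inl_inr, Sum.inr.injEq]
    exact ⟨eq_pendantEdge_of_inr_mem, fun h => h ▸ Sym2.mem_mk_right _ _⟩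

variable (G) in
def withPendantEdges (ι : V → V ⊕ V) : V ⊕ V → (V ⊕ V) ⊕ (corona G).edgeSet :=
  Sum.elim (fun a => Sum.inr (pendantEdge G a)) (fun a => Sum.inl (ι a))

theorem ncard_range_withPendantEdges [Fintype V] {ι : V → V ⊕ V} (hι : Injective ι) :
    (Set.range (withPendantEdges G ι)).ncard = 2 * Fintype.card V := by
  rw [Set.ncard_range_of_injective, Nat.card_eq_fintype_card, Fintype.card_sum, two_mul]
  exact (Sum.inr_injective.comp pendantEdge_injective).sumElim (Sum.inl_injective.comp hι)
    fun _ _ => Sum.inr_ne_inl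

theorem isTotalDomSet_range_withPendantEdges_inr :
    IsTotalDomSet (middleGraph (corona G)) (Set.range (withPendantEdges G Sum.inr)) := by
  rintro ((a | a) | e)
  · exact ⟨_, ⟨Sum.inl a, rfl⟩, Sym2.mem_mk_left _ _⟩
  · exact ⟨_, ⟨Sum.inl a, rfl⟩, Sym2.mem_mk_right _ _⟩
  · rcases exists_eq_pendantEdge_or_mem_range e with ⟨a, rfl⟩ | ⟨e, rfl⟩
    · exact ⟨_, ⟨Sum.inr a, rfl⟩, Sym2.mem_mk_right _ _⟩
    · set a := (e : Sym2 V).out.1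
      refine ⟨_, ⟨Sum.inl a, rfl⟩, ?_, Sum.inl a, ?_, Sym2.mem_mk_left _ _⟩
      · exact fun h => pendantEdge_notMem_range_mapEdgeSet a ⟨e, h⟩
      · exact Sym2.mem_map.2 ⟨a, Sym2.out_fst_mem _, rfl⟩

theorem compl_range_withPendantEdges_inr :
    (Set.range (withPendantEdges G Sum.inr))ᶜ = Set.range (inlEmbedding G).middleGraphMap := by
  ext ((a | a) | e) <;>
    simp only [Set.mem_compl_iff, Set.mem_range, Sum.exists, withPendantEdges, Sum.elim_inl,
      Sum.elim_inr, SimpleGraph.Embedding.middleGraphMap_inl,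
      SimpleGraph.Embedding.middleGraphMap_inr, inlEmbedding_apply, Sum.inl.injEq, Sum.inr.injEq,
      reduceCtorEq, exists_false, exists_eq, or_false, false_or, not_true_eq_false,
      not_false_eq_true]
  refine ⟨fun h => (exists_eq_pendantEdge_or_mem_range e).resolve_left
    fun ⟨a, ha⟩ => h ⟨a, ha.symm⟩, ?_⟩
  rintro ⟨e, rfl⟩ ⟨a, ha⟩
  exact pendantEdge_notMem_range_mapEdgeSet a ⟨e, ha.symm⟩

theorem isTOCDomSet_range_withPendantEdges_inr (hG : G.Connected) :
    IsTOCDomSet (middleGraph (corona G)) (Set.range (withPendantEdges G Sum.inr)) :=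
  ⟨isTotalDomSet_range_withPendantEdges_inr,
    compl_range_withPendantEdges_inr ▸ (middleGraph_connected hG).induce_range _⟩

theorem two_mul_card_le_ncard_of_isTOCDomSet [Fintype V]
    {D : Set ((V ⊕ V) ⊕ (corona G).edgeSet)} (hD : IsTOCDomSet (middleGraph (corona G)) D) :
    2 * Fintype.card V ≤ D.ncard := by
  have hpendant : ∀ a, Sum.inr (pendantEdge G a) ∈ D := fun a =>
    hD.1.mem_of_forall_adj_eq fun _ => middleGraph_adj_inl_inr_iff.1
  suffices ∃ ι : V → V ⊕ V, Injective ι ∧ ∀ a, Sum.inl (ι a) ∈ D by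
    obtain ⟨ι, hι, hιD⟩ := this
    rw [← ncard_range_withPendantEdges hι]
    refine Set.ncard_le_ncard ?_ (Set.toFinite D)
    rintro _ ⟨a | a, rfl⟩
    exacts [hpendant a, hιD a]
  by_cases hall : ∀ a, Sum.inl (Sum.inr a) ∈ D
  · exact ⟨Sum.inr, Sum.inr_injective, hall⟩
  · obtain ⟨a₀, ha₀⟩ := not_forall.1 hall
    refine ⟨Sum.inl, Sum.inl_injective, fun a => hD.mem_of_forall_adj_mem ha₀ ?_ (by simp)⟩
    intro x hx
    exact middleGraph_adj_inl_inr_iff.1 hx ▸ hpendant a₀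

end corona

theorem stmt14_general {V : Type*} [Fintype V] (G : SimpleGraph V) (hG : G.Connected) :
    tocDomNum (middleGraph (corona G)) = 2 * Fintype.card V := by
  have hcard := corona.ncard_range_withPendantEdges (G := G) Sum.inr_injective
  rw [tocDomNum_eq_ncard (corona.isTOCDomSet_range_withPendantEdges_inr hG) fun _ hD =>
    hcard ▸ corona.two_mul_card_le_ncard_of_isTOCDomSet hD, hcard]

theorem stmt14 {V : Type*} [Fintype V] (G : SimpleGraph V) (hG : G.Connected)
    (hn : 2 ≤ Fintype.card V) :
    tocDomNum (middleGraph (corona G)) = 2 * Fintype.card V :=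
  stmt14_general G hG
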